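/- arXiv:0907.3312 — 2 statements merged into one kernel-verified Lean document; each statement's English description precedes it below -/
import Mathlib

section
/- (Zhan's conjecture) For all n×n matrices A and B with non-negative real entries, the spectral radius of the Hadamard product A∘B is at most the spectral radius of the conventional matrix product AB: ρ(A∘B) ≤ ρ(AB). -/
/-! Entrywise, `(A∘B)² = (A∘B)(B∘A) ≤ (AB)∘(BA)`, because `∑ xₖyₖ ≤ (∑ xₖ)(∑ yₖ)` for
nonnegative terms; similarly `(X∘Y)ᵏ ≤ Xᵏ∘Yᵏ`, so `((A∘B)²)ᵏ ≤ (AB)ᵏ∘(BA)ᵏ`. The `ℓ∞` operator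
norm is monotone on nonnegative matrices and submultiplicative for `∘`, hence
`‖((A∘B)²)ᵏ‖ ≤ ‖(AB)ᵏ‖ ‖(BA)ᵏ‖`, and Gelfand's formula turns this into
`ρ(A∘B)² ≤ ρ((A∘B)²) ≤ ρ(AB) ρ(BA) = ρ(AB)²`. -/

open Matrix

/-- The spectral radius of a real square matrix: the largest modulus of its
complex eigenvalues, i.e. the supremum of the moduli of the elements of the
spectrum of the matrix viewed as a complex matrix. -/
noncomputable def specRad {n : ℕ} (A : Matrix (Fin n) (Fin n) ℝ) : ℝ :=
  sSup {r : ℝ | ∃ μ ∈ spectrum ℂ (A.map (fun a => (a : ℂ))), ‖μ‖ = r}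

open scoped ENNReal Matrix.Norms.Operator

theorem Finset.sum_mul_le_sum_mul_sum {ι R : Type*} [Semiring R] [PartialOrder R]
    [IsOrderedRing R] (s : Finset ι) {f g : ι → R} (hf : ∀ i ∈ s, 0 ≤ f i)
    (hg : ∀ i ∈ s, 0 ≤ g i) :
    ∑ i ∈ s, f i * g i ≤ (∑ i ∈ s, f i) * ∑ i ∈ s, g i := by
  rw [Finset.sum_mul]
  exact Finset.sum_le_sum fun i hi =>
    mul_le_mul_of_nonneg_left (Finset.single_le_sum hg hi) (hf i hi)

namespace Matrix

variable {ι R : Type*}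

section Semiring

variable [Semiring R] [PartialOrder R] [IsOrderedRing R] {A B C D : Matrix ι ι R}

theorem hadamard_apply_nonneg (hA : ∀ i j, 0 ≤ A i j) (hB : ∀ i j, 0 ≤ B i j) (i j : ι) :
    0 ≤ (A ⊙ B) i j :=
  mul_nonneg (hA i j) (hB i j)

variable [Fintype ι]

theorem mul_apply_nonneg (hA : ∀ i j, 0 ≤ A i j) (hB : ∀ i j, 0 ≤ B i j) (i j : ι) :
    0 ≤ (A * B) i j :=
  Finset.sum_nonneg fun k _ => mul_nonneg (hA i k) (hB k j)

theorem mul_apply_le_mul_apply (hA : ∀ i j, 0 ≤ A i j) (hC : ∀ i j, 0 ≤ C i j)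
    (hAB : ∀ i j, A i j ≤ B i j) (hCD : ∀ i j, C i j ≤ D i j) (i j : ι) :
    (A * C) i j ≤ (B * D) i j :=
  Finset.sum_le_sum fun k _ =>
    mul_le_mul (hAB i k) (hCD k j) (hC k j) ((hA i k).trans (hAB i k))

theorem pow_apply_le_pow_apply [DecidableEq ι] (hA : ∀ i j, 0 ≤ A i j)
    (hAB : ∀ i j, A i j ≤ B i j) (k : ℕ) (i j : ι) : (A ^ k) i j ≤ (B ^ k) i j := by
  induction k generalizing i j with
  | zero => rfl
  | succ k ih =>
    rw [pow_succ, pow_succ]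
    exact mul_apply_le_mul_apply (pow_apply_nonneg hA k) hA ih hAB i j

end Semiring

section CommSemiring

variable [Fintype ι] [CommSemiring R] [PartialOrder R] [IsOrderedRing R]
  {A B C D : Matrix ι ι R}

theorem hadamard_mul_hadamard_apply_le (hA : ∀ i j, 0 ≤ A i j) (hB : ∀ i j, 0 ≤ B i j)
    (hC : ∀ i j, 0 ≤ C i j) (hD : ∀ i j, 0 ≤ D i j) (i j : ι) :
    ((A ⊙ B) * (C ⊙ D)) i j ≤ ((A * C) ⊙ (B * D)) i j := by
  calc ((A ⊙ B) * (C ⊙ D)) i j = ∑ k, (A i k * C k j) * (B i k * D k j) :=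
        Finset.sum_congr rfl fun k _ => by simp only [hadamard_apply]; ring
    _ ≤ ((A * C) ⊙ (B * D)) i j :=
        Finset.sum_mul_le_sum_mul_sum _ (fun k _ => mul_nonneg (hA i k) (hC k j))
          (fun k _ => mul_nonneg (hB i k) (hD k j))

variable [DecidableEq ι]

theorem hadamard_pow_apply_le (hA : ∀ i j, 0 ≤ A i j) (hB : ∀ i j, 0 ≤ B i j)
    (k : ℕ) (i j : ι) : ((A ⊙ B) ^ k) i j ≤ ((A ^ k) ⊙ (B ^ k)) i j := by
  have hAB := hadamard_apply_nonneg hA hB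
  induction k generalizing i j with
  | zero => by_cases h : i = j <;> simp [h]
  | succ k ih =>
    rw [pow_succ, pow_succ, pow_succ]
    calc ((A ⊙ B) ^ k * (A ⊙ B)) i j ≤ (((A ^ k) ⊙ (B ^ k)) * (A ⊙ B)) i j :=
          mul_apply_le_mul_apply (pow_apply_nonneg hAB k) hAB ih (fun _ _ => le_rfl) i j
      _ ≤ _ := hadamard_mul_hadamard_apply_le (pow_apply_nonneg hA k) (pow_apply_nonneg hB k)
          hA hB i j

theorem hadamard_sq_pow_apply_le (hA : ∀ i j, 0 ≤ A i j) (hB : ∀ i j, 0 ≤ B i j)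
    (k : ℕ) (i j : ι) : (((A ⊙ B) ^ 2) ^ k) i j ≤ (((A * B) ^ k) ⊙ ((B * A) ^ k)) i j := by
  have hsq : ∀ i j, ((A ⊙ B) ^ 2) i j ≤ ((A * B) ⊙ (B * A)) i j := fun i j => by
    rw [sq]
    nth_rw 2 [hadamard_comm]
    exact hadamard_mul_hadamard_apply_le hA hB hB hA i j
  calc (((A ⊙ B) ^ 2) ^ k) i j ≤ (((A * B) ⊙ (B * A)) ^ k) i j :=
        pow_apply_le_pow_apply (pow_apply_nonneg (hadamard_apply_nonneg hA hB) 2)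
          hsq k i j
    _ ≤ _ := hadamard_pow_apply_le (mul_apply_nonneg hA hB) (mul_apply_nonneg hB hA) k i j

end CommSemiring

section LinftyOpNorm

variable {m n α β : Type*} [Fintype m] [Fintype n]

theorem linfty_opNNNorm_le_of_nnnorm_le [SeminormedAddCommGroup α] {A B : Matrix m n α}
    (h : ∀ i j, ‖A i j‖₊ ≤ ‖B i j‖₊) : ‖A‖₊ ≤ ‖B‖₊ := by
  simp only [linfty_opNNNorm_def]
  exact Finset.sup_mono_fun fun i _ => Finset.sum_le_sum fun j _ => h i j

theorem linfty_opNNNorm_map_eq [SeminormedAddCommGroup α] [SeminormedAddCommGroup β]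
    {f : α → β} (hf : ∀ a, ‖f a‖₊ = ‖a‖₊) (A : Matrix m n α) : ‖A.map f‖₊ = ‖A‖₊ := by
  simp only [linfty_opNNNorm_def, map_apply, hf]

theorem linfty_opNNNorm_le_of_nonneg_of_le {A B : Matrix m n ℝ} (hA : ∀ i j, 0 ≤ A i j)
    (hAB : ∀ i j, A i j ≤ B i j) : ‖A‖₊ ≤ ‖B‖₊ :=
  linfty_opNNNorm_le_of_nnnorm_le fun i j =>
    NNReal.coe_le_coe.mp (abs_le_abs_of_nonneg (hA i j) (hAB i j))

theorem nnnorm_apply_le_linfty_opNNNorm [SeminormedAddCommGroup α] (A : Matrix m n α)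
    (i : m) (j : n) : ‖A i j‖₊ ≤ ‖A‖₊ := by
  rw [linfty_opNNNorm_def]
  exact (Finset.single_le_sum (fun j _ => zero_le) (Finset.mem_univ j)).trans
    (Finset.le_sup (f := fun i => ∑ j, ‖A i j‖₊) (Finset.mem_univ i))

theorem linfty_opNNNorm_hadamard_le [NonUnitalSeminormedRing α] (A B : Matrix m n α) :
    ‖A ⊙ B‖₊ ≤ ‖A‖₊ * ‖B‖₊ := by
  calc ‖A ⊙ B‖₊ = Finset.univ.sup fun i => ∑ j, ‖A i j * B i j‖₊ := linfty_opNNNorm_def _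
    _ ≤ Finset.univ.sup fun i => (∑ j, ‖A i j‖₊) * ‖B‖₊ := Finset.sup_mono_fun fun i _ => by
        rw [Finset.sum_mul]
        exact Finset.sum_le_sum fun j _ => (nnnorm_mul_le _ _).trans
          (mul_le_mul_right (nnnorm_apply_le_linfty_opNNNorm B i j) _)
    _ = ‖A‖₊ * ‖B‖₊ := by rw [linfty_opNNNorm_def A, NNReal.finset_sup_mul]

end LinftyOpNorm

end Matrix

namespace spectrum

section Algebra

variable {𝕜 A : Type*} [NormedField 𝕜] [Ring A] [Algebra 𝕜 A]

theorem spectralRadius_toReal (a : A) :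
    (spectralRadius 𝕜 a).toReal = sSup ((‖·‖) '' spectrum 𝕜 a) := by
  rw [spectralRadius, ← sSup_image,
    ENNReal.toReal_sSup _ (by rintro _ ⟨k, -, rfl⟩; exact ENNReal.coe_ne_top), Set.image_image]
  simp

theorem spectralRadius_mul_comm_le (a b : A) :
    spectralRadius 𝕜 (a * b) ≤ spectralRadius 𝕜 (b * a) :=
  iSup₂_le fun k hk => by
    by_cases hk0 : k = 0
    · simp [hk0]
    · exact le_iSup₂ (f := fun k (_ : k ∈ spectrum 𝕜 (b * a)) => (‖k‖₊ : ℝ≥0∞)) k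
        (unit_mem_mul_comm (r := Units.mk0 k hk0) |>.mp hk)

theorem spectralRadius_mul_comm (a b : A) :
    spectralRadius 𝕜 (a * b) = spectralRadius 𝕜 (b * a) :=
  (spectralRadius_mul_comm_le a b).antisymm (spectralRadius_mul_comm_le b a)

end Algebra

theorem spectralRadius_ne_top {𝕜 A : Type*} [NormedField 𝕜] [NormedRing A] [NormedAlgebra 𝕜 A]
    [CompleteSpace A] (a : A) : spectralRadius 𝕜 a ≠ ⊤ :=
  (spectralRadius_le_pow_nnnorm_pow_one_div 𝕜 a 0).trans_lt
    (ENNReal.mul_lt_top (by simp) (by simp)) |>.ne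

theorem spectralRadius_le_mul_of_nnnorm_pow_le {A : Type*} [NormedRing A] [NormedAlgebra ℂ A]
    [CompleteSpace A] {a b c : A} (h : ∀ k : ℕ, ‖a ^ k‖₊ ≤ ‖b ^ k‖₊ * ‖c ^ k‖₊) :
    spectralRadius ℂ a ≤ spectralRadius ℂ b * spectralRadius ℂ c := by
  refine le_of_tendsto_of_tendsto' (pow_nnnorm_pow_one_div_tendsto_nhds_spectralRadius a)
    (ENNReal.Tendsto.mul (pow_nnnorm_pow_one_div_tendsto_nhds_spectralRadius b)
      (.inr (spectralRadius_ne_top c)) (pow_nnnorm_pow_one_div_tendsto_nhds_spectralRadius c)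
      (.inr (spectralRadius_ne_top b))) fun k => ?_
  rw [← ENNReal.mul_rpow_of_nonneg _ _ (by positivity)]
  exact ENNReal.rpow_le_rpow (by exact_mod_cast h k) (by positivity)

end spectrum

namespace Matrix

variable {ι : Type*} [Fintype ι] [DecidableEq ι]

theorem spectralRadius_map_hadamard_le {A B : Matrix ι ι ℝ} (hA : ∀ i j, 0 ≤ A i j)
    (hB : ∀ i j, 0 ≤ B i j) :
    spectralRadius ℂ ((A ⊙ B).map ((↑) : ℝ → ℂ)) ≤
      spectralRadius ℂ ((A * B).map ((↑) : ℝ → ℂ)) := by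
  set φ : Matrix ι ι ℝ →+* Matrix ι ι ℂ := Complex.ofRealHom.mapMatrix
  have hφ : ∀ M, ‖φ M‖₊ = ‖M‖₊ := linfty_opNNNorm_map_eq Complex.nnnorm_real
  have hnorm : ∀ k : ℕ,
      ‖φ ((A ⊙ B) ^ 2) ^ k‖₊ ≤ ‖φ (A * B) ^ k‖₊ * ‖φ (B * A) ^ k‖₊ := fun k => by
    simp only [← map_pow, hφ]
    calc ‖((A ⊙ B) ^ 2) ^ k‖₊ ≤ ‖((A * B) ^ k) ⊙ ((B * A) ^ k)‖₊ :=
          linfty_opNNNorm_le_of_nonneg_of_le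
            (pow_apply_nonneg (pow_apply_nonneg (hadamard_apply_nonneg hA hB) 2) k)
            (hadamard_sq_pow_apply_le hA hB k)
      _ ≤ _ := linfty_opNNNorm_hadamard_le _ _
  have hsq : spectralRadius ℂ (φ (A ⊙ B)) ^ 2 ≤ spectralRadius ℂ (φ (A * B)) ^ 2 :=
    calc spectralRadius ℂ (φ (A ⊙ B)) ^ 2 ≤ spectralRadius ℂ (φ (A ⊙ B) ^ 2) :=
          spectrum.spectralRadius_pow_le _ 2 two_ne_zero
      _ = spectralRadius ℂ (φ ((A ⊙ B) ^ 2)) := by rw [map_pow]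
      _ ≤ spectralRadius ℂ (φ (A * B)) * spectralRadius ℂ (φ (B * A)) :=
          spectrum.spectralRadius_le_mul_of_nnnorm_pow_le hnorm
      _ = spectralRadius ℂ (φ (A * B)) ^ 2 := by
          rw [sq, map_mul φ B A, spectrum.spectralRadius_mul_comm, ← map_mul]
  exact (ENNReal.pow_le_pow_left_iff two_ne_zero).mp hsq

end Matrix

theorem specRad_eq_toReal_spectralRadius {n : ℕ} (A : Matrix (Fin n) (Fin n) ℝ) :
    specRad A = (spectralRadius ℂ (A.map ((↑) : ℝ → ℂ))).toReal :=
  (spectrum.spectralRadius_toReal _).symm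

theorem zhan_conjecture {n : ℕ} (A B : Matrix (Fin n) (Fin n) ℝ)
    (hA : ∀ i j, 0 ≤ A i j) (hB : ∀ i j, 0 ≤ B i j) :
    specRad (A.hadamard B) ≤ specRad (A * B) := by
  rw [specRad_eq_toReal_spectralRadius, specRad_eq_toReal_spectralRadius]
  exact ENNReal.toReal_mono (spectrum.spectralRadius_ne_top _)
    (spectralRadius_map_hadamard_le hA hB)
end

section
/- For all n×n matrices A and B with non-negative real entries and every positive integer k, Tr((A∘B)^{2k}) ≤ Tr((AB)^{2k}), where ∘ denotes the Hadamard product and Tr the trace. -/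
open Matrix Filter

/-!
Write `C = A ⊙ B`. Since `C * C = (A ⊙ B) * (B ⊙ A)`, the Schur-type entrywise bound
`(P ⊙ Q) * (S ⊙ T) ≤ (P * S) ⊙ (Q * T)` for non-negative matrices gives
`C ^ (2k) ≤ ((A * B) ⊙ (B * A)) ^ k ≤ ((A * B) ^ k) ⊙ ((B * A) ^ k)` entrywise. Taking traces,
`tr (C ^ (2k)) ≤ ∑ᵢ xᵢ yᵢ` with `x, y` the diagonals of `(A * B) ^ k` and `(B * A) ^ k`, and
AM-GM bounds `2 ∑ᵢ xᵢ yᵢ` by `tr ((A * B) ^ (2k)) + tr ((B * A) ^ (2k)) = 2 tr ((A * B) ^ (2k))`.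
-/

namespace Matrix

variable {ι R : Type*} [Fintype ι]

theorem trace_mul_pow_comm [DecidableEq ι] [CommSemiring R] (A B : Matrix ι ι R) (m : ℕ) :
    trace ((A * B) ^ m) = trace ((B * A) ^ m) := by
  cases m with
  | zero => rfl
  | succ m =>
    calc trace ((A * B) ^ (m + 1)) = trace (((A * B) ^ m * A) * B) := by
          rw [pow_succ, Matrix.mul_assoc]
      _ = trace (B * (A * (B * A) ^ m)) := by rw [trace_mul_comm, mul_pow_mul]
      _ = trace ((B * A) ^ (m + 1)) := by rw [pow_succ', Matrix.mul_assoc]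

section OrderedSemiring

variable [CommSemiring R] [PartialOrder R] [IsOrderedRing R]

omit [Fintype ι] in
theorem hadamard_apply_nonneg_s8 {X Y : Matrix ι ι R} (hX : ∀ i j, 0 ≤ X i j)
    (hY : ∀ i j, 0 ≤ Y i j) (i j : ι) : 0 ≤ (X ⊙ Y) i j :=
  mul_nonneg (hX i j) (hY i j)

theorem mul_apply_nonneg_s8 {X Y : Matrix ι ι R} (hX : ∀ i j, 0 ≤ X i j) (hY : ∀ i j, 0 ≤ Y i j)
    (i j : ι) : 0 ≤ (X * Y) i j :=
  Finset.sum_nonneg fun l _ => mul_nonneg (hX i l) (hY l j)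

theorem mul_apply_le_mul_apply_s8 {X X' Y Y' : Matrix ι ι R} (hX : ∀ i j, 0 ≤ X i j)
    (hY : ∀ i j, 0 ≤ Y i j) (hXX' : ∀ i j, X i j ≤ X' i j) (hYY' : ∀ i j, Y i j ≤ Y' i j)
    (i j : ι) : (X * Y) i j ≤ (X' * Y') i j :=
  Finset.sum_le_sum fun l _ => mul_le_mul (hXX' i l) (hYY' l j) (hY l j) ((hX i l).trans (hXX' i l))

theorem pow_apply_le_pow_apply_s8 [DecidableEq ι] {X Y : Matrix ι ι R} (hX : ∀ i j, 0 ≤ X i j)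
    (hXY : ∀ i j, X i j ≤ Y i j) (k : ℕ) (i j : ι) : (X ^ k) i j ≤ (Y ^ k) i j := by
  induction k generalizing i j with
  | zero => rfl
  | succ k ih =>
    rw [pow_succ, pow_succ]
    exact mul_apply_le_mul_apply_s8 (pow_apply_nonneg hX k) hX ih hXY i j

theorem hadamard_mul_hadamard_apply_le_s8 {P Q S T : Matrix ι ι R} (hP : ∀ i j, 0 ≤ P i j)
    (hQ : ∀ i j, 0 ≤ Q i j) (hS : ∀ i j, 0 ≤ S i j) (hT : ∀ i j, 0 ≤ T i j) (i j : ι) :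
    ((P ⊙ Q) * (S ⊙ T)) i j ≤ ((P * S) ⊙ (Q * T)) i j := by
  simp only [mul_apply, hadamard_apply, Finset.sum_mul]
  refine Finset.sum_le_sum fun l _ => ?_
  calc P i l * Q i l * (S l j * T l j) = (P i l * S l j) * (Q i l * T l j) := by ring
    _ ≤ (P i l * S l j) * ∑ m, Q i m * T m j :=
      mul_le_mul_of_nonneg_left
        (Finset.single_le_sum (fun m _ => mul_nonneg (hQ i m) (hT m j)) (Finset.mem_univ l))
        (mul_nonneg (hP i l) (hS l j))

theorem hadamard_pow_apply_le_s8 [DecidableEq ι] {M N : Matrix ι ι R} (hM : ∀ i j, 0 ≤ M i j)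
    (hN : ∀ i j, 0 ≤ N i j) (k : ℕ) (i j : ι) : ((M ⊙ N) ^ k) i j ≤ ((M ^ k) ⊙ (N ^ k)) i j := by
  induction k generalizing i j with
  | zero => by_cases h : i = j <;> simp [h]
  | succ k ih =>
    rw [pow_succ, pow_succ, pow_succ]
    calc ((M ⊙ N) ^ k * (M ⊙ N)) i j ≤ (((M ^ k) ⊙ (N ^ k)) * (M ⊙ N)) i j :=
          mul_apply_le_mul_apply_s8 (pow_apply_nonneg (hadamard_apply_nonneg_s8 hM hN) k)
            (hadamard_apply_nonneg_s8 hM hN) ih (fun _ _ => le_rfl) i j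
      _ ≤ ((M ^ k * M) ⊙ (N ^ k * N)) i j :=
          hadamard_mul_hadamard_apply_le_s8 (pow_apply_nonneg hM k) (pow_apply_nonneg hN k) hM hN i j

theorem hadamard_pow_two_mul_apply_le [DecidableEq ι] {A B : Matrix ι ι R}
    (hA : ∀ i j, 0 ≤ A i j) (hB : ∀ i j, 0 ≤ B i j) (k : ℕ) (i j : ι) :
    ((A ⊙ B) ^ (2 * k)) i j ≤ (((A * B) ^ k) ⊙ ((B * A) ^ k)) i j := by
  have hsq : ∀ i j, ((A ⊙ B) * (A ⊙ B)) i j ≤ ((A * B) ⊙ (B * A)) i j := by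
    simpa only [hadamard_comm B A] using hadamard_mul_hadamard_apply_le_s8 hA hB hB hA
  rw [pow_mul, sq]
  exact (pow_apply_le_pow_apply_s8 (mul_apply_nonneg_s8 (hadamard_apply_nonneg_s8 hA hB)
    (hadamard_apply_nonneg_s8 hA hB)) hsq k i j).trans
    (hadamard_pow_apply_le_s8 (mul_apply_nonneg_s8 hA hB) (mul_apply_nonneg_s8 hB hA) k i j)

end OrderedSemiring

theorem two_mul_sum_diag_mul_diag_le [CommRing R] [LinearOrder R] [IsStrictOrderedRing R]
    {P Q : Matrix ι ι R} (hP : ∀ i j, 0 ≤ P i j) (hQ : ∀ i j, 0 ≤ Q i j) :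
    2 * ∑ i, P i i * Q i i ≤ trace (P * P) + trace (Q * Q) := by
  have diag_sq_le {X : Matrix ι ι R} (hX : ∀ i j, 0 ≤ X i j) (i : ι) : X i i ^ 2 ≤ (X * X) i i :=
    (sq (X i i)).trans_le
      (Finset.single_le_sum (f := fun j => X i j * X j i)
        (fun j _ => mul_nonneg (hX i j) (hX j i)) (Finset.mem_univ i))
  rw [Finset.mul_sum, trace, trace, ← Finset.sum_add_distrib]
  refine Finset.sum_le_sum fun i _ => ?_
  calc 2 * (P i i * Q i i) ≤ P i i ^ 2 + Q i i ^ 2 := by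
        rw [← mul_assoc]; exact two_mul_le_add_sq _ _
    _ ≤ (P * P) i i + (Q * Q) i i := add_le_add (diag_sq_le hP i) (diag_sq_le hQ i)

end Matrix

theorem trace_hadamard_pow_le_trace_mul_pow_general {n : ℕ} (A B : Matrix (Fin n) (Fin n) ℝ)
    (hA : ∀ i j, 0 ≤ A i j) (hB : ∀ i j, 0 ≤ B i j) (k : ℕ) :
    Matrix.trace ((A.hadamard B) ^ (2 * k)) ≤ Matrix.trace ((A * B) ^ (2 * k)) := by
  have hAB := pow_apply_nonneg (mul_apply_nonneg_s8 hA hB) k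
  have hBA := pow_apply_nonneg (mul_apply_nonneg_s8 hB hA) k
  have hsq (X : Matrix (Fin n) (Fin n) ℝ) : X ^ k * X ^ k = X ^ (2 * k) := by rw [two_mul, pow_add]
  have hdiag : trace ((A ⊙ B) ^ (2 * k)) ≤ ∑ i, ((A * B) ^ k) i i * ((B * A) ^ k) i i :=
    Finset.sum_le_sum fun i _ => hadamard_pow_two_mul_apply_le hA hB k i i
  have hamgm := two_mul_sum_diag_mul_diag_le hAB hBA
  rw [hsq, hsq, ← trace_mul_pow_comm A B] at hamgm
  linarith

theorem trace_hadamard_pow_le_trace_mul_pow {n : ℕ} (A B : Matrix (Fin n) (Fin n) ℝ)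
    (hA : ∀ i j, 0 ≤ A i j) (hB : ∀ i j, 0 ≤ B i j) (k : ℕ) (hk : 0 < k) :
    Matrix.trace ((A.hadamard B) ^ (2 * k)) ≤ Matrix.trace ((A * B) ^ (2 * k)) :=
  trace_hadamard_pow_le_trace_mul_pow_general A B hA hB k
end
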